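/- arXiv:2105.13181 — 3 statements merged into one kernel-verified Lean document; each statement's English description precedes it below -/
import Mathlib

section
/- Let R(λ) be invertible, T(λ) = [R(λ)⁻¹; λR(λ)⁻¹; W₁(λ)R(λ)⁻¹] with W₁(λ) = (A − λE)⁻¹B, and let v be a unit right singular vector of T(λ) corresponding to its largest singular value σ_max(T(λ)). Define ΔA₀ = −v(R(λ)⁻¹v)*/σ_max(T(λ))², ΔA₁ = −λ̄·v(R(λ)⁻¹v)*/σ_max(T(λ))², ΔC = −v(W₁(λ)R(λ)⁻¹v)*/σ_max(T(λ))². Then (R(λ) + ΔA₀ + λΔA₁ + ΔC(A − λE)⁻¹B)·R(λ)⁻¹v = 0, i.e. the perturbed matrix R(λ) + ΔR(λ) is singular. -/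
/-!
Put u = R⁻¹v, W₁ = (A − λE)⁻¹B and S = [I; λI; W₁], so that T = S R⁻¹ and T v = S u.
The three perturbations are the blocks of the row −σ⁻² v (T v)*, hence
ΔA₀ + λΔA₁ + ΔC W₁ = −σ⁻² v (T v)* S and this sends u to −σ⁻² ‖T v‖² v = −v,
because ‖T v‖² = v* T*T v = σ². Here σ = σ_max(T) ≠ 0, since u ≠ 0 is the first block of T v.
-/

open Matrix BigOperators

noncomputable def evnorm {n : Type*} [Fintype n] (v : n → ℂ) : ℝ :=
  Real.sqrt (∑ i, ‖v i‖ ^ 2)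

noncomputable def frob {m n : Type*} [Fintype m] [Fintype n] (M : Matrix m n ℂ) : ℝ :=
  Real.sqrt (∑ i, ∑ j, ‖M i j‖ ^ 2)

noncomputable def sigmaMax {m n : Type*} [Fintype m] [Fintype n] (T : Matrix m n ℂ) : ℝ :=
  sSup {x | ∃ v, evnorm v = 1 ∧ x = evnorm (T.mulVec v)}

noncomputable def sigmaMin {m n : Type*} [Fintype m] [Fintype n] (T : Matrix m n ℂ) : ℝ :=
  sInf {x | ∃ v, evnorm v = 1 ∧ x = evnorm (T.mulVec v)}

def hcat3 {i a b c : Type*} (A : Matrix i a ℂ) (B : Matrix i b ℂ) (C : Matrix i c ℂ) :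
    Matrix i (a ⊕ b ⊕ c) ℂ :=
  Matrix.of fun x j => match j with
    | Sum.inl j => A x j
    | Sum.inr (Sum.inl j) => B x j
    | Sum.inr (Sum.inr j) => C x j

def vcat3 {a b c j : Type*} (A : Matrix a j ℂ) (B : Matrix b j ℂ) (C : Matrix c j ℂ) :
    Matrix (a ⊕ b ⊕ c) j ℂ :=
  Matrix.of fun i y => match i with
    | Sum.inl i => A i y
    | Sum.inr (Sum.inl i) => B i y
    | Sum.inr (Sum.inr i) => C i y

noncomputable def Lnorm (m : ℕ) (μ : ℂ) : ℝ :=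
  Real.sqrt (∑ i ∈ Finset.range (m + 1), ‖μ‖ ^ (2 * i))

lemma star_dotProduct_self_of_evnorm_eq_one {n : Type*} [Fintype n] {v : n → ℂ}
    (hv : evnorm v = 1) : star v ⬝ᵥ v = 1 := by
  have hsum : ∑ i, ‖v i‖ ^ 2 = 1 := Real.sqrt_eq_one.mp hv
  simp only [dotProduct, Pi.star_apply, RCLike.star_def, RCLike.conj_mul]
  rw [← Complex.ofReal_one, ← hsum]
  push_cast
  rfl

lemma star_mulVec_dotProduct_mulVec_self {m n : Type*} [Fintype m] [Fintype n]
    (T : Matrix m n ℂ) {v : n → ℂ} {s : ℂ} (hTv : (Tᴴ * T) *ᵥ v = s • v)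
    (hv : star v ⬝ᵥ v = 1) : star (T *ᵥ v) ⬝ᵥ (T *ᵥ v) = s := by
  rw [star_mulVec, dotProduct_mulVec, vecMul_vecMul, ← dotProduct_mulVec, hTv,
    dotProduct_smul, hv, smul_eq_mul, mul_one]

section Blocks

variable {a b c j k : Type*}

lemma vcat3_mul [Fintype j] (X : Matrix a j ℂ) (Y : Matrix b j ℂ) (Z : Matrix c j ℂ)
    (M : Matrix j k ℂ) : vcat3 X Y Z * M = vcat3 (X * M) (Y * M) (Z * M) := by
  ext (i | i | i) l <;> rfl

lemma vcat3_mulVec [Fintype j] (X : Matrix a j ℂ) (Y : Matrix b j ℂ) (Z : Matrix c j ℂ)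
    (x : j → ℂ) : vcat3 X Y Z *ᵥ x = Sum.elim (X *ᵥ x) (Sum.elim (Y *ᵥ x) (Z *ᵥ x)) := by
  ext (i | i | i) <;> rfl

lemma hcat3_mul_vcat3 [Fintype a] [Fintype b] [Fintype c] (P : Matrix j a ℂ)
    (Q : Matrix j b ℂ) (S : Matrix j c ℂ) (X : Matrix a k ℂ) (Y : Matrix b k ℂ)
    (Z : Matrix c k ℂ) : hcat3 P Q S * vcat3 X Y Z = P * X + Q * Y + S * Z := by
  ext i l
  simp only [mul_apply, Fintype.sum_sum_type, Matrix.add_apply, add_assoc]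
  rfl

lemma vecMulVec_sumElim (x : j → ℂ) (p : a → ℂ) (q : b → ℂ) (s : c → ℂ) :
    vecMulVec x (Sum.elim p (Sum.elim q s)) =
      hcat3 (vecMulVec x p) (vecMulVec x q) (vecMulVec x s) := by
  ext i (l | l | l) <;> rfl

end Blocks

theorem stmt2_general {n r : ℕ} (μ : ℂ)
    (A E : Matrix (Fin r) (Fin r) ℂ) (B : Matrix (Fin r) (Fin n) ℂ)
    (R : Matrix (Fin n) (Fin n) ℂ)
    (hRu : IsUnit R)
    (T : Matrix (Fin n ⊕ Fin n ⊕ Fin r) (Fin n) ℂ)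
    (hT : T = vcat3 R⁻¹ (μ • R⁻¹) ((A - μ • E)⁻¹ * B * R⁻¹))
    (v : Fin n → ℂ) (hv : evnorm v = 1)
    (hsing : (Tᴴ * T).mulVec v = ((sigmaMax T : ℂ) ^ 2) • v)
    (ΔA0 ΔA1 : Matrix (Fin n) (Fin n) ℂ) (ΔC : Matrix (Fin n) (Fin r) ℂ)
    (hΔA0 : ΔA0 = -(((sigmaMax T : ℂ) ^ 2)⁻¹ • vecMulVec v (star (R⁻¹.mulVec v))))
    (hΔA1 : ΔA1 = -((starRingEnd ℂ μ * ((sigmaMax T : ℂ) ^ 2)⁻¹) •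
        vecMulVec v (star (R⁻¹.mulVec v))))
    (hΔC : ΔC = -(((sigmaMax T : ℂ) ^ 2)⁻¹ •
        vecMulVec v (star (((A - μ • E)⁻¹ * B * R⁻¹).mulVec v)))) :
    (R + (ΔA0 + μ • ΔA1 + ΔC * ((A - μ • E)⁻¹ * B))).mulVec (R⁻¹.mulVec v) = 0 := by
  set W := (A - μ • E)⁻¹ * B
  set σ2 : ℂ := (sigmaMax T : ℂ) ^ 2
  set u := R⁻¹ *ᵥ v
  set S : Matrix (Fin n ⊕ Fin n ⊕ Fin r) (Fin n) ℂ := vcat3 1 (μ • 1) W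
  have hvR : R *ᵥ u = v := by
    rw [mulVec_mulVec, mul_nonsing_inv R ((isUnit_iff_isUnit_det R).mp hRu), one_mulVec]
  have hTv : T *ᵥ v = S *ᵥ u := by
    rw [mulVec_mulVec, vcat3_mul, hT, Matrix.one_mul, smul_mul, Matrix.one_mul]
  have hv1 : star v ⬝ᵥ v = 1 := star_dotProduct_self_of_evnorm_eq_one hv
  have hnorm : star (T *ᵥ v) ⬝ᵥ (T *ᵥ v) = σ2 := star_mulVec_dotProduct_mulVec_self T hsing hv1
  have hσ2 : σ2 ≠ 0 := by
    intro h0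
    open scoped ComplexOrder in rw [h0, dotProduct_star_self_eq_zero, hTv] at hnorm
    have hu : u = 0 := funext fun i => by
      simpa [S, vcat3_mulVec] using congrFun hnorm (Sum.inl i)
    simp [← hvR, hu] at hv1
  have hΔ : ΔA0 + μ • ΔA1 + ΔC * W = -(σ2⁻¹ • (vecMulVec v (star (T *ᵥ v)) * S)) := by
    rw [hT, vcat3_mulVec, Function.star_sumElim, Function.star_sumElim, vecMulVec_sumElim,
      hcat3_mul_vcat3, hΔA0, hΔA1, hΔC, smul_mulVec, star_smul, vecMulVec_smul]
    simp only [Matrix.mul_one, Matrix.mul_smul, Matrix.neg_mul, Matrix.smul_mul, smul_neg,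
      RCLike.star_def]
    module
  rw [hΔ, add_mulVec, hvR, neg_mulVec, smul_mulVec, ← mulVec_mulVec, ← hTv, vecMulVec_mulVec,
    hnorm, op_smul_eq_smul, smul_smul, inv_mul_cancel₀ hσ2, one_smul, add_neg_cancel]

theorem stmt2 {n r : ℕ} (μ : ℂ)
    (A0 A1 : Matrix (Fin n) (Fin n) ℂ)
    (A E : Matrix (Fin r) (Fin r) ℂ) (B : Matrix (Fin r) (Fin n) ℂ)
    (C : Matrix (Fin n) (Fin r) ℂ)
    (hAE : IsUnit (A - μ • E))
    (R : Matrix (Fin n) (Fin n) ℂ)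
    (hR : R = A0 + μ • A1 + C * ((A - μ • E)⁻¹ * B))
    (hRu : IsUnit R)
    (T : Matrix (Fin n ⊕ Fin n ⊕ Fin r) (Fin n) ℂ)
    (hT : T = vcat3 R⁻¹ (μ • R⁻¹) ((A - μ • E)⁻¹ * B * R⁻¹))
    (v : Fin n → ℂ) (hv : evnorm v = 1)
    (hsing : (Tᴴ * T).mulVec v = ((sigmaMax T : ℂ) ^ 2) • v)
    (ΔA0 ΔA1 : Matrix (Fin n) (Fin n) ℂ) (ΔC : Matrix (Fin n) (Fin r) ℂ)
    (hΔA0 : ΔA0 = -(((sigmaMax T : ℂ) ^ 2)⁻¹ • vecMulVec v (star (R⁻¹.mulVec v))))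
    (hΔA1 : ΔA1 = -((starRingEnd ℂ μ * ((sigmaMax T : ℂ) ^ 2)⁻¹) •
        vecMulVec v (star (R⁻¹.mulVec v))))
    (hΔC : ΔC = -(((sigmaMax T : ℂ) ^ 2)⁻¹ •
        vecMulVec v (star (((A - μ • E)⁻¹ * B * R⁻¹).mulVec v)))) :
    (R + (ΔA0 + μ • ΔA1 + ΔC * ((A - μ • E)⁻¹ * B))).mulVec (R⁻¹.mulVec v) = 0 :=
  stmt2_general μ A E B R hRu T hT v hv hsing ΔA0 ΔA1 ΔC hΔA0 hΔA1 hΔC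
end

section
/- With the notation of the previous statement (Δ constructed from a top right singular vector v of T(λ)), the Frobenius norm of the block perturbation Δ = [ΔA₀ ΔA₁ ΔC] satisfies ‖Δ‖_F = 1/σ_max(T(λ)). -/
open Matrix BigOperators

/-
Since `v` is a unit eigenvector of `Tᴴ T` for `σ²`, `‖T v‖² = v* Tᴴ T v = σ²`. Each block of
`Δ` is `-σ⁻²` times `v` times the conjugate transpose of the matching block of `T v` (the factor
`λ̄` of `ΔA₁` is the conjugate of the `λ` in the middle block of `T`), so
`Δ = -σ⁻² v (T v)*` is a single rank-one matrix and `‖Δ‖_F = σ⁻² ‖v‖ ‖T v‖ = σ⁻¹`.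
-/

section Norms

variable {m n : Type*} [Fintype m] [Fintype n]

lemma evnorm_sq (v : n → ℂ) : evnorm v ^ 2 = ∑ i, ‖v i‖ ^ 2 :=
  Real.sq_sqrt (Finset.sum_nonneg fun _ _ => sq_nonneg _)

lemma ofReal_evnorm_sq (v : n → ℂ) : ((evnorm v ^ 2 : ℝ) : ℂ) = star v ⬝ᵥ v := by
  simp only [evnorm_sq, Complex.ofReal_sum, dotProduct, Pi.star_apply]
  refine Finset.sum_congr rfl fun i _ => ?_
  rw [mul_comm, Complex.star_def, Complex.mul_conj, Complex.normSq_eq_norm_sq]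

lemma evnorm_star (w : n → ℂ) : evnorm (star w) = evnorm w := by
  simp [evnorm]

lemma frob_smul (c : ℂ) (M : Matrix m n ℂ) : frob (c • M) = ‖c‖ * frob M := by
  simp only [frob, Matrix.smul_apply, smul_eq_mul, norm_mul, mul_pow]
  simp only [← Finset.mul_sum]
  rw [Real.sqrt_mul (sq_nonneg _), Real.sqrt_sq (norm_nonneg _)]

lemma frob_neg (M : Matrix m n ℂ) : frob (-M) = frob M := by
  simp [frob]

lemma frob_vecMulVec (u : m → ℂ) (w : n → ℂ) : frob (vecMulVec u w) = evnorm u * evnorm w := by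
  simp only [frob, evnorm, vecMulVec_apply, norm_mul, mul_pow]
  rw [← Finset.sum_mul_sum]
  exact Real.sqrt_mul (Finset.sum_nonneg fun _ _ => sq_nonneg _) _

lemma evnorm_mulVec_of_conjTranspose_mul_self_mulVec {T : Matrix m n ℂ} {v : n → ℂ} {σ : ℝ}
    (hσ : 0 ≤ σ) (hv : evnorm v = 1) (hsing : (Tᴴ * T) *ᵥ v = ((σ : ℂ) ^ 2) • v) :
    evnorm (T *ᵥ v) = σ := by
  have hsq : ((evnorm (T *ᵥ v) ^ 2 : ℝ) : ℂ) = ((σ ^ 2 : ℝ) : ℂ) := by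
    rw [ofReal_evnorm_sq, star_mulVec, ← dotProduct_mulVec, mulVec_mulVec, hsing,
      dotProduct_smul, ← ofReal_evnorm_sq, hv]
    simp
  exact (pow_left_inj₀ (Real.sqrt_nonneg _) hσ two_ne_zero).mp (Complex.ofReal_injective hsq)

end Norms

lemma hcat3_vecMulVec_vcat3_mulVec {i a b c k : Type*} [Fintype k] (u : i → ℂ) (v : k → ℂ)
    (P : Matrix a k ℂ) (Q : Matrix b k ℂ) (S : Matrix c k ℂ) :
    hcat3 (vecMulVec u (star (P *ᵥ v))) (vecMulVec u (star (Q *ᵥ v)))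
      (vecMulVec u (star (S *ᵥ v))) = vecMulVec u (star (vcat3 P Q S *ᵥ v)) := by
  ext x (j | j | j) <;> rfl

theorem stmt3_general {n r : ℕ} (μ : ℂ)
    (A E : Matrix (Fin r) (Fin r) ℂ) (B : Matrix (Fin r) (Fin n) ℂ)
    (R : Matrix (Fin n) (Fin n) ℂ)
    (T : Matrix (Fin n ⊕ Fin n ⊕ Fin r) (Fin n) ℂ)
    (hT : T = vcat3 R⁻¹ (μ • R⁻¹) ((A - μ • E)⁻¹ * B * R⁻¹))
    (hσ : 0 < sigmaMax T)
    (v : Fin n → ℂ) (hv : evnorm v = 1)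
    (hsing : (Tᴴ * T).mulVec v = ((sigmaMax T : ℂ) ^ 2) • v)
    (ΔA0 ΔA1 : Matrix (Fin n) (Fin n) ℂ) (ΔC : Matrix (Fin n) (Fin r) ℂ)
    (hΔA0 : ΔA0 = -(((sigmaMax T : ℂ) ^ 2)⁻¹ • vecMulVec v (star (R⁻¹.mulVec v))))
    (hΔA1 : ΔA1 = -((starRingEnd ℂ μ * ((sigmaMax T : ℂ) ^ 2)⁻¹) •
        vecMulVec v (star (R⁻¹.mulVec v))))
    (hΔC : ΔC = -(((sigmaMax T : ℂ) ^ 2)⁻¹ •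
        vecMulVec v (star (((A - μ • E)⁻¹ * B * R⁻¹).mulVec v)))) :
    frob (hcat3 ΔA0 ΔA1 ΔC) = 1 / sigmaMax T := by
  set σ := sigmaMax T
  have hΔ : hcat3 ΔA0 ΔA1 ΔC = -(((σ : ℂ) ^ 2)⁻¹ • vecMulVec v (star (T *ᵥ v))) := by
    have hΔA1' : ΔA1 = -(((σ : ℂ) ^ 2)⁻¹ • vecMulVec v (star ((μ • R⁻¹) *ᵥ v))) := by
      rw [hΔA1, smul_mulVec, star_smul, vecMulVec_smul, smul_smul, mul_comm]
      rfl
    rw [hΔA0, hΔA1', hΔC, hT, ← hcat3_vecMulVec_vcat3_mulVec]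
    ext x (j | j | j) <;> rfl
  rw [hΔ, frob_neg, frob_smul, frob_vecMulVec, hv,
    evnorm_star, evnorm_mulVec_of_conjTranspose_mul_self_mulVec hσ.le hv hsing,
    norm_inv, norm_pow, Complex.norm_real, Real.norm_of_nonneg hσ.le]
  field_simp

theorem stmt3 {n r : ℕ} (μ : ℂ)
    (A0 A1 : Matrix (Fin n) (Fin n) ℂ)
    (A E : Matrix (Fin r) (Fin r) ℂ) (B : Matrix (Fin r) (Fin n) ℂ)
    (C : Matrix (Fin n) (Fin r) ℂ)
    (hAE : IsUnit (A - μ • E))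
    (R : Matrix (Fin n) (Fin n) ℂ)
    (hR : R = A0 + μ • A1 + C * ((A - μ • E)⁻¹ * B))
    (hRu : IsUnit R)
    (T : Matrix (Fin n ⊕ Fin n ⊕ Fin r) (Fin n) ℂ)
    (hT : T = vcat3 R⁻¹ (μ • R⁻¹) ((A - μ • E)⁻¹ * B * R⁻¹))
    (hσ : 0 < sigmaMax T)
    (v : Fin n → ℂ) (hv : evnorm v = 1)
    (hsing : (Tᴴ * T).mulVec v = ((sigmaMax T : ℂ) ^ 2) • v)
    (ΔA0 ΔA1 : Matrix (Fin n) (Fin n) ℂ) (ΔC : Matrix (Fin n) (Fin r) ℂ)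
    (hΔA0 : ΔA0 = -(((sigmaMax T : ℂ) ^ 2)⁻¹ • vecMulVec v (star (R⁻¹.mulVec v))))
    (hΔA1 : ΔA1 = -((starRingEnd ℂ μ * ((sigmaMax T : ℂ) ^ 2)⁻¹) •
        vecMulVec v (star (R⁻¹.mulVec v))))
    (hΔC : ΔC = -(((sigmaMax T : ℂ) ^ 2)⁻¹ •
        vecMulVec v (star (((A - μ • E)⁻¹ * B * R⁻¹).mulVec v)))) :
    frob (hcat3 ΔA0 ΔA1 ΔC) = 1 / sigmaMax T :=
  stmt3_general μ A E B R T hT hσ v hv hsing ΔA0 ΔA1 ΔC hΔA0 hΔA1 hΔC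
end

section
/- Let P(λ) = Σ_{i=0}^{m} λⁱAᵢ with Aᵢ ∈ ℂ^{n×n}, let λ ∈ ℂ, and let x ∈ ℂⁿ be a unit vector. Define ΔAᵢ = −λ̄ⁱ/‖Λ_m‖₂² · (P(λ)x)x* for i = 0,…,m. Then (P(λ) + ΔP(λ))x = 0 where ΔP(λ) = Σ λⁱΔAᵢ, and ‖(‖ΔA₀‖₂, …, ‖ΔA_m‖₂)‖₂ = ‖P(λ)x‖₂/‖Λ_m‖₂, where ‖Λ_m‖₂ = ‖(1, λ, …, λᵐ)‖₂. Consequently the backward error η₂(x, λ, P) := min{‖(‖ΔA₀‖₂,…,‖ΔA_m‖₂)‖₂ : (P(λ)+ΔP(λ))x = 0} is at most ‖P(λ)x‖₂/‖Λ_m‖₂. -/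
open Matrix BigOperators

/-!
Every `ΔAᵢ` is a multiple of the rank-one matrix `(P x) x*`, whose spectral norm is
`‖P x‖₂` because `‖x‖₂ = 1`. Since `Σ λⁱ λ̄ⁱ = ‖Λ_m‖₂²`, the perturbation `Σ λⁱ ΔAᵢ`
collapses to `-(P x) x*`, which annihilates `P x` when applied to `x`; and the coefficient
vector `(λ̄ⁱ / ‖Λ_m‖₂²)ᵢ` has Euclidean norm `1 / ‖Λ_m‖₂`. This admissible perturbation
bounds the backward error from above.
-/

section EuclideanNorm

variable {ι κ : Type*} [Fintype ι]

lemma evnorm_eq_norm (v : ι → ℂ) : evnorm v = ‖WithLp.toLp 2 v‖ := by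
  rw [EuclideanSpace.norm_eq]; rfl

lemma evnorm_nonneg (v : ι → ℂ) : 0 ≤ evnorm v :=
  Real.sqrt_nonneg _

lemma evnorm_smul (a : ℂ) (v : ι → ℂ) : evnorm (a • v) = ‖a‖ * evnorm v := by
  rw [evnorm_eq_norm, evnorm_eq_norm, WithLp.toLp_smul, norm_smul]

lemma star_dotProduct_eq_inner (x v : ι → ℂ) :
    star x ⬝ᵥ v = inner ℂ (WithLp.toLp 2 x) (WithLp.toLp 2 v) := by
  simp [dotProduct, PiLp.inner_apply, mul_comm]

lemma star_dotProduct_self_of_evnorm_eq_one_s11 {x : ι → ℂ} (hx : evnorm x = 1) :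
    star x ⬝ᵥ x = 1 := by
  rw [star_dotProduct_eq_inner, inner_self_eq_norm_sq_to_K, ← evnorm_eq_norm, hx]
  norm_num

lemma norm_star_dotProduct_le {x v : ι → ℂ} (hx : evnorm x = 1) (hv : evnorm v = 1) :
    ‖star x ⬝ᵥ v‖ ≤ 1 := by
  calc ‖star x ⬝ᵥ v‖ ≤ evnorm x * evnorm v := by
        rw [star_dotProduct_eq_inner, evnorm_eq_norm, evnorm_eq_norm]
        exact norm_inner_le_norm _ _
    _ = 1 := by rw [hx, hv, one_mul]

lemma vecMulVec_star_mulVec (u : κ → ℂ) (x v : ι → ℂ) :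
    vecMulVec u (star x) *ᵥ v = (star x ⬝ᵥ v) • u := by
  rw [vecMulVec_mulVec, op_smul_eq_smul]

lemma sigmaMax_vecMulVec_star [Fintype κ] (u : κ → ℂ) {x : ι → ℂ} (hx : evnorm x = 1) :
    sigmaMax (vecMulVec u (star x)) = evnorm u := by
  refine IsGreatest.csSup_eq ⟨⟨x, hx, ?_⟩, ?_⟩
  · rw [vecMulVec_star_mulVec, star_dotProduct_self_of_evnorm_eq_one_s11 hx, one_smul]
  · rintro _ ⟨v, hv, rfl⟩
    rw [vecMulVec_star_mulVec, evnorm_smul]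
    exact mul_le_of_le_one_left (evnorm_nonneg u) (norm_star_dotProduct_le hx hv)

end EuclideanNorm

section PowerVector

variable (m : ℕ) (μ : ℂ)

lemma Lnorm_sq : Lnorm m μ ^ 2 = ∑ i : Fin (m + 1), ‖μ‖ ^ (2 * (i : ℕ)) := by
  rw [Lnorm, Real.sq_sqrt (by positivity), Fin.sum_univ_eq_sum_range (fun i => ‖μ‖ ^ (2 * i))]

lemma one_le_Lnorm : 1 ≤ Lnorm m μ := by
  rw [Lnorm, Real.one_le_sqrt, Finset.sum_range_succ']
  simpa using Finset.sum_nonneg fun i _ => pow_nonneg (norm_nonneg μ) (2 * (i + 1))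

lemma Lnorm_pos : 0 < Lnorm m μ :=
  one_pos.trans_le (one_le_Lnorm m μ)

lemma pow_mul_conj_pow (i : ℕ) :
    μ ^ i * (starRingEnd ℂ μ) ^ i = ((‖μ‖ ^ (2 * i) : ℝ) : ℂ) := by
  rw [← mul_pow, Complex.mul_conj', pow_mul]
  push_cast; rfl

lemma sum_pow_mul_conj_pow_div_Lnorm_sq :
    ∑ i : Fin (m + 1), μ ^ (i : ℕ) * ((starRingEnd ℂ μ) ^ (i : ℕ) / (Lnorm m μ : ℂ) ^ 2) =
      1 := by
  have hL : (Lnorm m μ : ℂ) ^ 2 ≠ 0 := pow_ne_zero 2 (by exact_mod_cast (Lnorm_pos m μ).ne')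
  simp_rw [← mul_div_assoc, pow_mul_conj_pow, ← Finset.sum_div]
  rw [div_eq_one_iff_eq hL]
  exact_mod_cast (Lnorm_sq m μ).symm

lemma sqrt_sum_sq_norm_pow_mul (c : ℝ) :
    Real.sqrt (∑ i : Fin (m + 1), (‖μ‖ ^ (i : ℕ) * c) ^ 2) = Lnorm m μ * |c| := by
  simp_rw [mul_pow, ← pow_mul, mul_comm _ 2, ← Finset.sum_mul, ← Lnorm_sq]
  rw [Real.sqrt_mul' _ (sq_nonneg c), Real.sqrt_sq (Lnorm_pos m μ).le, Real.sqrt_sq_eq_abs]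

end PowerVector

theorem stmt11_general {n m : ℕ} (μ : ℂ)
    (x : Fin n → ℂ) (hx : evnorm x = 1)
    (P : Matrix (Fin n) (Fin n) ℂ)
    (ΔA : Fin (m + 1) → Matrix (Fin n) (Fin n) ℂ)
    (hΔA : ∀ i, ΔA i = -(((starRingEnd ℂ μ) ^ (i : ℕ) / ((Lnorm m μ : ℂ)) ^ 2) •
        vecMulVec (P.mulVec x) (star x))) :
    (P + ∑ i : Fin (m + 1), μ ^ (i : ℕ) • ΔA i).mulVec x = 0 ∧
    Real.sqrt (∑ i, sigmaMax (ΔA i) ^ 2) = evnorm (P.mulVec x) / Lnorm m μ ∧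
    sInf {ε | ∃ ΔA' : Fin (m + 1) → Matrix (Fin n) (Fin n) ℂ,
        (P + ∑ i : Fin (m + 1), μ ^ (i : ℕ) • ΔA' i).mulVec x = 0 ∧
        ε = Real.sqrt (∑ i, sigmaMax (ΔA' i) ^ 2)} ≤
      evnorm (P.mulVec x) / Lnorm m μ := by
  have hL := Lnorm_pos m μ
  have hsum : ∑ i : Fin (m + 1), μ ^ (i : ℕ) • ΔA i = -vecMulVec (P *ᵥ x) (star x) := by
    simp_rw [hΔA, smul_neg, smul_smul, Finset.sum_neg_distrib, ← Finset.sum_smul,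
      sum_pow_mul_conj_pow_div_Lnorm_sq, one_smul]
  have hsolve : (P + ∑ i : Fin (m + 1), μ ^ (i : ℕ) • ΔA i) *ᵥ x = 0 := by
    rw [hsum, add_mulVec, neg_mulVec, vecMulVec_star_mulVec,
      star_dotProduct_self_of_evnorm_eq_one_s11 hx, one_smul, add_neg_cancel]
  have hsigma : ∀ i : Fin (m + 1),
      sigmaMax (ΔA i) = ‖μ‖ ^ (i : ℕ) * (evnorm (P *ᵥ x) / Lnorm m μ ^ 2) := by
    intro i
    rw [hΔA, ← neg_smul, ← smul_vecMulVec, sigmaMax_vecMulVec_star _ hx, evnorm_smul, norm_neg,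
      norm_div, norm_pow, norm_pow, Complex.norm_conj, Complex.norm_real, Real.norm_of_nonneg hL.le]
    ring
  have hnorm : Real.sqrt (∑ i, sigmaMax (ΔA i) ^ 2) = evnorm (P *ᵥ x) / Lnorm m μ := by
    simp_rw [hsigma, sqrt_sum_sq_norm_pow_mul,
      abs_of_nonneg (div_nonneg (evnorm_nonneg _) (sq_nonneg _))]
    field_simp
  refine ⟨hsolve, hnorm, csInf_le ⟨0, ?_⟩ ⟨ΔA, hsolve, hnorm.symm⟩⟩
  rintro _ ⟨_, _, rfl⟩
  exact Real.sqrt_nonneg _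

theorem stmt11 {n m : ℕ} (μ : ℂ)
    (Amat : Fin (m + 1) → Matrix (Fin n) (Fin n) ℂ)
    (x : Fin n → ℂ) (hx : evnorm x = 1)
    (P : Matrix (Fin n) (Fin n) ℂ) (hP : P = ∑ i : Fin (m + 1), μ ^ (i : ℕ) • Amat i)
    (ΔA : Fin (m + 1) → Matrix (Fin n) (Fin n) ℂ)
    (hΔA : ∀ i, ΔA i = -(((starRingEnd ℂ μ) ^ (i : ℕ) / ((Lnorm m μ : ℂ)) ^ 2) •
        vecMulVec (P.mulVec x) (star x))) :
    (P + ∑ i : Fin (m + 1), μ ^ (i : ℕ) • ΔA i).mulVec x = 0 ∧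
    Real.sqrt (∑ i, sigmaMax (ΔA i) ^ 2) = evnorm (P.mulVec x) / Lnorm m μ ∧
    sInf {ε | ∃ ΔA' : Fin (m + 1) → Matrix (Fin n) (Fin n) ℂ,
        (P + ∑ i : Fin (m + 1), μ ^ (i : ℕ) • ΔA' i).mulVec x = 0 ∧
        ε = Real.sqrt (∑ i, sigmaMax (ΔA' i) ^ 2)} ≤
      evnorm (P.mulVec x) / Lnorm m μ :=
  stmt11_general μ x hx P ΔA hΔA
end
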